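/- Let D be the Toeplitz digraph of T_n⟨S;T⟩ with S = {s_1 < ⋯ < s_{k_1}}, T = {t_1 < ⋯ < t_{k_2}}, max S + min T ≤ n and min S + max T ≤ n, and let d = gcd{s + t : s ∈ S, t ∈ T}. Suppose that for each 1 ≤ i ≤ d, the subgraph of the competition graph C(D) induced on the vertex set {v ∈ {1,…,n} : v ≡ i (mod d)} is connected. Then for every integer m ≥ 2(⌈n/d⌉ − 1)·(max{⌈t_{k_2}/s_1⌉, ⌈s_{k_1}/t_1⌉} + 1) + 2(s_1 + t_1) and all distinct vertices u, v of D, u and v are adjacent in the m-step competition graph C^m(D) if and only if u ≡ v (mod d). (That is, the competition index of T_n⟨S;T⟩ is at most 2(⌈n/d⌉ − 1)(max{⌈t_{k_2}/s_1⌉, ⌈s_{k_1}/t_1⌉} + 1) + 2(s_1 + t_1).) -/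

import Mathlib

/-- The Toeplitz digraph of `T_n⟨S;T⟩`: vertices are integers in `[1, n]`, and
there is an arc `(u, v)` iff `v − u ∈ S` or `u − v ∈ T`. -/
def ToepArc (n : ℕ) (S T : Finset ℕ) (u v : ℤ) : Prop :=
  u ∈ Finset.Icc (1 : ℤ) (n : ℤ) ∧ v ∈ Finset.Icc (1 : ℤ) (n : ℤ) ∧
    ((∃ s ∈ S, v = u + (s : ℤ)) ∨ (∃ t ∈ T, v = u - (t : ℤ)))

/-- There is a directed `(u,v)`-walk of length `m` in the Toeplitz digraph. -/
def HasWalk (n : ℕ) (S T : Finset ℕ) (m : ℕ) (u v : ℤ) : Prop :=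
  ∃ w : ℕ → ℤ, w 0 = u ∧ w m = v ∧ ∀ i < m, ToepArc n S T (w i) (w (i + 1))

/-- `u` and `v` are adjacent in the `m`-step competition graph `C^m(D)`;
`m = 1` gives the competition graph `C(D)`. -/
def CompAdj (n : ℕ) (S T : Finset ℕ) (m : ℕ) (u v : ℤ) : Prop :=
  u ≠ v ∧ ∃ x : ℤ, HasWalk n S T m u x ∧ HasWalk n S T m v x

/-!
Write `s₀ = min S`, `t₀ = min T` and `M = max ⌈max T / s₀⌉ ⌈max S / t₀⌉`.
Every arc moves by a step congruent to `s₀` modulo `d`, since `a - s₀ = (a + t₀) - (s₀ + t₀)`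
and `-b - s₀ = -(s₀ + b)`; so `m`-step walks from `u` and `v` can only meet if `u ≡ v (mod d)`.

Conversely, measure a walk of length `k` from `p` to `q` by its drift `q - p + k t₀` modulo
`N = s₀ + t₀`. Steps `+s₀` and `-t₀` do not change it, while a step `+a` or `-b` adds `a + t₀`
or `t₀ - b`. Taking at most `M` steps `-t₀` (or `+s₀`) first to make room, each such drift is
realised by at most `M + 1` steps. These drifts generate the subgroup `dℤ/Nℤ` of order `N / d`,
so by pigeonhole on partial sums every multiple of `d` is, modulo `N`, a sum of fewer than `N / d`
of them. Finally, walks made of steps `+s₀` and `-t₀` join any two vertices `p, q` in `k` steps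
once `q - p + k t₀ ≡ 0 (mod N)` and `k s₀, k t₀ ≥ n`; this lets the walks from `u` and `v` meet.
-/

open Finset

section Walks

variable {n : ℕ} {S T : Finset ℕ}

theorem hasWalk_zero_iff {u v : ℤ} : HasWalk n S T 0 u v ↔ u = v :=
  ⟨fun ⟨_, h₀, h₁, _⟩ => h₀.symm.trans h₁, fun h => ⟨fun _ => u, rfl, h, by simp⟩⟩

theorem hasWalk_succ_iff {m : ℕ} {u v : ℤ} :
    HasWalk n S T (m + 1) u v ↔ ∃ w, ToepArc n S T u w ∧ HasWalk n S T m w v := by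
  constructor
  · rintro ⟨w, h₀, hm, harc⟩
    exact ⟨w 1, h₀ ▸ harc 0 m.succ_pos, fun i => w (i + 1), rfl, hm,
      fun i hi => harc (i + 1) (by omega)⟩
  · rintro ⟨x, hux, w, h₀, hm, harc⟩
    refine ⟨fun i => if i = 0 then u else w (i - 1), rfl, by simpa using hm, ?_⟩
    rintro (_ | i) hi
    · simpa [h₀] using hux
    · simpa using harc i (by omega)

theorem HasWalk.append {m₁ m₂ : ℕ} {u w v : ℤ} (h₁ : HasWalk n S T m₁ u w)
    (h₂ : HasWalk n S T m₂ w v) : HasWalk n S T (m₁ + m₂) u v := by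
  induction m₁ generalizing u with
  | zero => rwa [zero_add, hasWalk_zero_iff.1 h₁]
  | succ m₁ ih =>
    obtain ⟨x, hux, hx⟩ := hasWalk_succ_iff.1 h₁
    rw [Nat.add_right_comm, hasWalk_succ_iff]
    exact ⟨x, hux, ih hx⟩

theorem HasWalk.modEq {d c : ℤ} (hstep : ∀ u v, ToepArc n S T u v → v ≡ u + c [ZMOD d])
    {m : ℕ} {u v : ℤ} (h : HasWalk n S T m u v) : v ≡ u + m * c [ZMOD d] := by
  induction m generalizing u with
  | zero => simp [hasWalk_zero_iff.1 h]
  | succ m ih =>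
    obtain ⟨w, huw, hw⟩ := hasWalk_succ_iff.1 h
    calc v ≡ w + m * c [ZMOD d] := ih hw
      _ ≡ u + c + m * c [ZMOD d] := (hstep u w huw).add_right _
      _ = u + ↑(m + 1) * c := by push_cast; ring

theorem toepArc_add {a : ℕ} (ha : a ∈ S) {p : ℤ} (hp : 1 ≤ p) (hpa : p + a ≤ n) :
    ToepArc n S T p (p + a) :=
  ⟨mem_Icc.2 ⟨hp, by omega⟩, mem_Icc.2 ⟨by omega, hpa⟩, .inl ⟨a, ha, rfl⟩⟩

theorem toepArc_sub {b : ℕ} (hb : b ∈ T) {p : ℤ} (hpb : 1 ≤ p - b) (hp : p ≤ n) :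
    ToepArc n S T p (p - b) :=
  ⟨mem_Icc.2 ⟨by omega, hp⟩, mem_Icc.2 ⟨hpb, by omega⟩, .inr ⟨b, hb, rfl⟩⟩

end Walks

structure IsAnchorPair (n : ℕ) (S T : Finset ℕ) (s₀ t₀ : ℕ) : Prop where
  mem_left : s₀ ∈ S
  mem_right : t₀ ∈ T
  left_pos : 0 < s₀
  right_pos : 0 < t₀
  add_right_le : ∀ a ∈ S, a + t₀ ≤ n
  left_add_le : ∀ b ∈ T, s₀ + b ≤ n

theorem exists_le_sub_mul_mem_Icc {lo hi p c : ℤ} (hc : lo + c ≤ hi + 1) (hp : lo ≤ p) (M : ℕ)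
    (hpM : p ≤ hi + M * c) : ∃ k ≤ M, lo ≤ p - k * c ∧ p - k * c ≤ hi := by
  induction M generalizing p with
  | zero => exact ⟨0, le_rfl, by simpa using hp, by simpa using hpM⟩
  | succ M ih =>
    by_cases hphi : p ≤ hi
    · exact ⟨0, by omega, by simpa using hp, by simpa using hphi⟩
    obtain ⟨k, hkM, hk⟩ := ih (p := p - c) (by omega) (by push_cast at hpM; linarith)
    exact ⟨k + 1, by omega, by push_cast; constructor <;> linarith⟩

theorem Int.exists_mem_Icc_modEq {N : ℤ} (hN : 0 < N) (c : ℤ) :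
    ∃ z ∈ Set.Icc 1 N, z ≡ c [ZMOD N] :=
  ⟨(c - 1) % N + 1, ⟨by linarith [Int.emod_nonneg (c - 1) hN.ne'],
    by linarith [Int.emod_lt_of_pos (c - 1) hN]⟩,
    by simpa using (Int.mod_modEq (c - 1) N).add_right 1⟩

def driftSet (S T : Finset ℕ) (t₀ : ℕ) : Set ℤ :=
  {g | (∃ a ∈ S, g = a + t₀) ∨ ∃ b ∈ T, g = t₀ - b}

namespace IsAnchorPair

variable {n : ℕ} {S T : Finset ℕ} {s₀ t₀ : ℕ}

theorem add_le (h : IsAnchorPair n S T s₀ t₀) : s₀ + t₀ ≤ n :=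
  h.add_right_le s₀ h.mem_left

theorem hasWalk_of_eq_add_sub (h : IsAnchorPair n S T s₀ t₀) {a b : ℕ} {p q : ℤ}
    (hp : p ∈ Icc 1 (n : ℤ)) (hq : q ∈ Icc 1 (n : ℤ)) (hpq : q = p + a * s₀ - b * t₀) :
    HasWalk n S T (a + b) p q := by
  have hN := h.add_le
  have hs₀ := h.left_pos
  have ht₀ := h.right_pos
  rw [mem_Icc] at hp hq
  induction hk : a + b generalizing a b p with
  | zero =>
    obtain ⟨rfl, rfl⟩ : a = 0 ∧ b = 0 := by omega
    exact hasWalk_zero_iff.2 (by simpa using hpq.symm)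
  | succ k ih =>
    -- greedily step up by `s₀` while possible, otherwise down by `t₀`
    by_cases hup : 0 < a ∧ p + s₀ ≤ n
    · obtain ⟨a, rfl⟩ := Nat.exists_eq_add_one.2 hup.1
      refine hasWalk_succ_iff.2 ⟨p + s₀, toepArc_add h.mem_left hp.1 hup.2, ih (a := a) (b := b)
        ⟨by omega, hup.2⟩ (by push_cast at hpq; linarith) (by omega)⟩
    · obtain ⟨b, rfl⟩ : ∃ b', b = b' + 1 := by
        refine Nat.exists_eq_add_one.2 (Nat.pos_of_ne_zero fun hb => ?_)
        have : (s₀ : ℤ) ≤ a * s₀ := le_mul_of_one_le_left (by positivity) (by omega)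
        subst hb
        omega
      have hpt : 1 ≤ p - t₀ := by
        rcases Nat.eq_zero_or_pos a with rfl | ha
        · push_cast at hpq; nlinarith
        · omega
      refine hasWalk_succ_iff.2 ⟨p - t₀, toepArc_sub h.mem_right hpt hp.2, ih (a := a) (b := b)
        ⟨hpt, by omega⟩ (by push_cast at hpq; linarith) (by omega)⟩

theorem hasWalk_of_modEq (h : IsAnchorPair n S T s₀ t₀) {k : ℕ} (hks : n ≤ k * s₀)
    (hkt : n ≤ k * t₀) {p q : ℤ} (hp : p ∈ Icc 1 (n : ℤ)) (hq : q ∈ Icc 1 (n : ℤ))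
    (hpq : q - p + k * t₀ ≡ 0 [ZMOD (s₀ + t₀ : ℕ)]) : HasWalk n S T k p q := by
  obtain ⟨α, hα⟩ := Int.modEq_zero_iff_dvd.1 hpq
  have := mem_Icc.1 hp
  have := mem_Icc.1 hq
  have hks' : (n : ℤ) ≤ k * s₀ := by exact_mod_cast hks
  have hkt' : (n : ℤ) ≤ k * t₀ := by exact_mod_cast hkt
  push_cast at hα
  have hα₀ : 0 ≤ α := by nlinarith [h.left_pos, h.right_pos]
  lift α to ℕ using hα₀
  have hαk : α ≤ k := by
    by_contra! hkα
    have : (k : ℤ) + 1 ≤ α := by exact_mod_cast hkα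
    nlinarith [h.left_pos, h.right_pos]
  have := h.hasWalk_of_eq_add_sub (a := α) (b := k - α) hp hq
    (by push_cast [Nat.cast_sub hαk]; linarith)
  rwa [Nat.add_sub_cancel' hαk] at this

variable {M : ℕ}

theorem exists_hasWalk_modEq_of_mem_driftSet (h : IsAnchorPair n S T s₀ t₀)
    (hSM : ∀ a ∈ S, a ≤ M * t₀) (hTM : ∀ b ∈ T, b ≤ M * s₀) {g : ℤ}
    (hg : g ∈ driftSet S T t₀) {p : ℤ} (hp : p ∈ Icc 1 (n : ℤ)) :
    ∃ k ≤ M + 1, ∃ q ∈ Icc 1 (n : ℤ),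
      HasWalk n S T k p q ∧ q - p + k * t₀ ≡ g [ZMOD (s₀ + t₀ : ℕ)] := by
  obtain ⟨hp₁, hpn⟩ := mem_Icc.1 hp
  rcases hg with ⟨a, ha, rfl⟩ | ⟨b, hb, rfl⟩
  · have han : (a + t₀ : ℤ) ≤ n := by exact_mod_cast h.add_right_le a ha
    have haM : (a : ℤ) ≤ M * t₀ := by exact_mod_cast hSM a ha
    obtain ⟨k, hkM, hk₁, hkn⟩ :=
      exists_le_sub_mul_mem_Icc (lo := 1) (hi := n - a) (c := t₀) (by linarith) hp₁ M
        (by linarith)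
    have hdown := h.hasWalk_of_eq_add_sub (a := 0) (b := k) hp (q := p - k * t₀)
      (mem_Icc.2 ⟨hk₁, by linarith⟩) (by simp)
    refine ⟨0 + k + 1, by omega, p - k * t₀ + a, mem_Icc.2 ⟨by linarith, by linarith⟩,
      hdown.append (hasWalk_succ_iff.2 ⟨_, toepArc_add ha hk₁ (by linarith),
        hasWalk_zero_iff.2 rfl⟩), ?_⟩
    rw [show p - k * t₀ + a - p + ↑(0 + k + 1) * t₀ = a + t₀ by push_cast; ring]
  · have hbn : (s₀ + b : ℤ) ≤ n := by exact_mod_cast h.left_add_le b hb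
    have hbM : (b : ℤ) ≤ M * s₀ := by exact_mod_cast hTM b hb
    obtain ⟨k, hkM, hk₁, hkn⟩ :=
      exists_le_sub_mul_mem_Icc (lo := -n) (hi := -(1 + b)) (p := -p) (c := s₀) (by linarith)
        (by linarith) M (by linarith)
    have hup := h.hasWalk_of_eq_add_sub (a := k) (b := 0) hp (q := p + k * s₀)
      (mem_Icc.2 ⟨by linarith, by linarith⟩) (by simp)
    refine ⟨k + 0 + 1, by omega, p + k * s₀ - b, mem_Icc.2 ⟨by linarith, by linarith⟩,
      hup.append (hasWalk_succ_iff.2 ⟨_, toepArc_sub hb (by linarith) (by linarith),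
        hasWalk_zero_iff.2 rfl⟩), ?_⟩
    rw [show p + k * s₀ - b - p + ↑(k + 0 + 1) * t₀ = t₀ - b + (s₀ + t₀ : ℕ) * k by
      push_cast; ring]
    exact Int.add_mul_emod_self_left _ _ _

theorem exists_hasWalk_modEq_sum (h : IsAnchorPair n S T s₀ t₀)
    (hSM : ∀ a ∈ S, a ≤ M * t₀) (hTM : ∀ b ∈ T, b ≤ M * s₀) (L : List ℤ)
    (hL : ∀ g ∈ L, g ∈ driftSet S T t₀) {p : ℤ} (hp : p ∈ Icc 1 (n : ℤ)) :
    ∃ k ≤ L.length * (M + 1), ∃ q ∈ Icc 1 (n : ℤ),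
      HasWalk n S T k p q ∧ q - p + k * t₀ ≡ L.sum [ZMOD (s₀ + t₀ : ℕ)] := by
  induction L generalizing p with
  | nil => exact ⟨0, Nat.zero_le _, p, hp, hasWalk_zero_iff.2 rfl, by simp⟩
  | cons g L ih =>
    obtain ⟨k₁, hk₁, q₁, hq₁, hw₁, hd₁⟩ :=
      h.exists_hasWalk_modEq_of_mem_driftSet hSM hTM (hL g List.mem_cons_self) hp
    obtain ⟨k₂, hk₂, q₂, hq₂, hw₂, hd₂⟩ :=
      ih (fun g' hg' => hL g' (List.mem_cons_of_mem g hg')) hq₁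
    refine ⟨k₁ + k₂, by rw [List.length_cons, Nat.succ_mul]; omega, q₂, hq₂, hw₁.append hw₂, ?_⟩
    rw [List.sum_cons, show q₂ - p + ↑(k₁ + k₂) * t₀ =
      (q₁ - p + k₁ * t₀) + (q₂ - q₁ + k₂ * t₀) by push_cast; ring]
    exact hd₁.add hd₂

end IsAnchorPair

theorem List.exists_sublist_map_sum_eq_length_lt {α M : Type*} [AddMonoid M]
    (H : AddSubmonoid M) [Finite H] (f : α → M) (L : List α) (hL : ∀ x ∈ L, f x ∈ H) :
    ∃ L' : List α, L'.Sublist L ∧ (L'.map f).sum = (L.map f).sum ∧ L'.length < Nat.card H := by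
  induction hlen : L.length using Nat.strong_induction_on generalizing L with
  | _ len ih =>
  by_cases hlt : len < Nat.card H
  · exact ⟨L, .refl L, rfl, hlen ▸ hlt⟩
  let prefixSum : Fin (Nat.card H + 1) → H := fun i =>
    ⟨((L.take i).map f).sum, H.list_sum_mem fun y hy => by
      obtain ⟨x, hx, rfl⟩ := List.mem_map.1 hy
      exact hL x (List.mem_of_mem_take hx)⟩
  obtain ⟨i, j, hij, hne⟩ := Function.not_injective_iff.1 fun hinj => by
    simpa using Nat.card_le_card_of_injective prefixSum hinj
  wlog hlt' : i < j generalizing i j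
  · exact this j i hij.symm hne.symm (lt_of_le_of_ne (not_lt.1 hlt') hne.symm)
  have hsub : (L.take i ++ L.drop j).Sublist L := by
    simpa using (List.take_sublist_take_left (l := L) hlt'.le).append (.refl (L.drop j))
  have hsum : ((L.take i ++ L.drop j).map f).sum = (L.map f).sum := by
    have hprefix : ((L.take i).map f).sum = ((L.take j).map f).sum := congrArg Subtype.val hij
    rw [List.map_append, List.sum_append, hprefix, ← List.sum_append, ← List.map_append,
      List.take_append_drop]
  obtain ⟨L', hL', hsum', hlen'⟩ := ih _ (by simp; omega) _
    (fun x hx => hL x (hsub.subset hx)) rfl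
  exact ⟨L', hL'.trans hsub, hsum'.trans hsum, hlen'⟩

theorem Finset.natCast_gcd {ι : Type*} (s : Finset ι) (f : ι → ℕ) :
    ((s.gcd f : ℕ) : ℤ) = s.gcd fun i => (f i : ℤ) := by
  classical
  induction s using Finset.induction_on with
  | empty => simp
  | insert a s ha ih =>
    rw [gcd_insert, gcd_insert, ← ih, ← Int.coe_gcd, Int.gcd_natCast_natCast]
    rfl

def sumGcd (S T : Finset ℕ) : ℕ :=
  (S ×ˢ T).gcd fun p => p.1 + p.2

section SumGcd

variable {S T : Finset ℕ}

theorem sumGcd_dvd_add {a b : ℕ} (ha : a ∈ S) (hb : b ∈ T) : sumGcd S T ∣ a + b :=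
  Finset.gcd_dvd (b := (a, b)) (f := fun p : ℕ × ℕ => p.1 + p.2) (mem_product.2 ⟨ha, hb⟩)

theorem ToepArc.modEq_sumGcd {n s₀ t₀ : ℕ} (hs₀ : s₀ ∈ S) (ht₀ : t₀ ∈ T) {u v : ℤ}
    (h : ToepArc n S T u v) : v ≡ u + s₀ [ZMOD sumGcd S T] := by
  rcases h with ⟨-, -, ⟨a, ha, rfl⟩ | ⟨b, hb, rfl⟩⟩
  · refine Int.modEq_iff_dvd.2 ?_
    rw [show u + s₀ - (u + a) = (s₀ + t₀ : ℕ) - (a + t₀ : ℕ) by push_cast; ring]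
    exact dvd_sub (Int.natCast_dvd_natCast.2 (sumGcd_dvd_add hs₀ ht₀))
      (Int.natCast_dvd_natCast.2 (sumGcd_dvd_add ha ht₀))
  · refine Int.modEq_iff_dvd.2 ?_
    rw [show u + s₀ - (u - b) = (s₀ + b : ℕ) by push_cast; ring]
    exact Int.natCast_dvd_natCast.2 (sumGcd_dvd_add hs₀ hb)

theorem CompAdj.sumGcd_dvd_sub {n m s₀ t₀ : ℕ} (hs₀ : s₀ ∈ S) (ht₀ : t₀ ∈ T) {u v : ℤ}
    (h : CompAdj n S T m u v) : (sumGcd S T : ℤ) ∣ u - v := by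
  obtain ⟨-, x, hux, hvx⟩ := h
  have hu := hux.modEq fun _ _ => ToepArc.modEq_sumGcd hs₀ ht₀
  have hv := hvx.modEq fun _ _ => ToepArc.modEq_sumGcd hs₀ ht₀
  exact (Int.ModEq.add_right_cancel' _ (hv.symm.trans hu)).dvd

theorem sumGcd_mem_closure_driftSet (t₀ : ℕ) :
    (sumGcd S T : ℤ) ∈ AddSubgroup.closure (driftSet S T t₀) := by
  obtain ⟨c, hc⟩ := (S ×ˢ T).gcd_eq_sum_mul fun p => ((p.1 + p.2 : ℕ) : ℤ)
  rw [sumGcd, Finset.natCast_gcd, hc]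
  refine AddSubgroup.sum_mem _ fun p hp => ?_
  obtain ⟨ha, hb⟩ := mem_product.1 hp
  rw [mul_comm, ← smul_eq_mul]
  refine AddSubgroup.zsmul_mem _ ?_ _
  rw [show ((p.1 + p.2 : ℕ) : ℤ) = (p.1 + t₀) - (t₀ - p.2) by push_cast; ring]
  exact sub_mem (AddSubgroup.subset_closure (.inl ⟨_, ha, rfl⟩))
    (AddSubgroup.subset_closure (.inr ⟨_, hb, rfl⟩))

end SumGcd

namespace IsAnchorPair

variable {n : ℕ} {S T : Finset ℕ} {s₀ t₀ : ℕ}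

theorem sumGcd_dvd_of_mem_driftSet (h : IsAnchorPair n S T s₀ t₀) {g : ℤ}
    (hg : g ∈ driftSet S T t₀) : (sumGcd S T : ℤ) ∣ g := by
  rcases hg with ⟨a, ha, rfl⟩ | ⟨b, hb, rfl⟩
  · exact_mod_cast sumGcd_dvd_add ha h.mem_right
  · rw [show (t₀ - b : ℤ) = (s₀ + t₀ : ℕ) - (s₀ + b : ℕ) by push_cast; ring]
    exact dvd_sub (Int.natCast_dvd_natCast.2 (sumGcd_dvd_add h.mem_left h.mem_right))
      (Int.natCast_dvd_natCast.2 (sumGcd_dvd_add h.mem_left hb))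

theorem exists_list_driftSet_modEq (h : IsAnchorPair n S T s₀ t₀) {x : ℤ}
    (hx : (sumGcd S T : ℤ) ∣ x) :
    ∃ L : List ℤ, (∀ g ∈ L, g ∈ driftSet S T t₀) ∧ L.length < (s₀ + t₀) / sumGcd S T ∧
      x ≡ L.sum [ZMOD (s₀ + t₀ : ℕ)] := by
  set N := s₀ + t₀
  set d := sumGcd S T
  have : NeZero N := ⟨by have := h.left_pos; omega⟩
  let φ := Int.castAddHom (ZMod N)
  have hxN : φ x ∈ AddSubmonoid.closure (φ '' driftSet S T t₀) := by
    rw [← AddSubgroup.closure_toAddSubmonoid_of_finite, ← AddMonoidHom.map_closure]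
    obtain ⟨c, rfl⟩ := hx
    refine AddSubgroup.mem_map_of_mem _ ?_
    rw [mul_comm, ← smul_eq_mul]
    exact AddSubgroup.zsmul_mem _ (sumGcd_mem_closure_driftSet t₀) c
  rw [← AddMonoidHom.map_mclosure] at hxN
  obtain ⟨y, hy, hyx⟩ := hxN
  obtain ⟨L, hL, rfl⟩ := AddSubmonoid.exists_list_of_mem_closure hy
  obtain ⟨L', hsub, hsum, hlen⟩ := List.exists_sublist_map_sum_eq_length_lt
    (AddSubgroup.zmultiples (d : ZMod N)).toAddSubmonoid φ L fun g hg => by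
      obtain ⟨c, hc⟩ := h.sumGcd_dvd_of_mem_driftSet (hL g hg)
      exact ⟨c, by simp [φ, d, hc, mul_comm]⟩
  have hcard : Nat.card (AddSubgroup.zmultiples (d : ZMod N)).toAddSubmonoid = N / d := by
    change Nat.card (AddSubgroup.zmultiples (d : ZMod N)) = N / d
    rw [Nat.card_zmultiples, ZMod.addOrderOf_coe _ (NeZero.ne N),
      Nat.gcd_eq_right (sumGcd_dvd_add h.mem_left h.mem_right)]
  refine ⟨L', fun g hg => hL g (hsub.subset hg), hcard ▸ hlen, ?_⟩
  rw [← ZMod.intCast_eq_intCast_iff]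
  exact hyx.symm.trans ((map_list_sum φ L).trans (hsum.symm.trans (map_list_sum φ L').symm))

theorem compAdj_of_dvd (h : IsAnchorPair n S T s₀ t₀) {M r m : ℕ} (hSM : ∀ a ∈ S, a ≤ M * t₀)
    (hTM : ∀ b ∈ T, b ≤ M * s₀) (hrs : n ≤ r * s₀) (hrt : n ≤ r * t₀)
    (hm : ((s₀ + t₀) / sumGcd S T - 1) * (M + 1) + r ≤ m) {u v : ℤ} (hu : u ∈ Icc 1 (n : ℤ))
    (hv : v ∈ Icc 1 (n : ℤ)) (huv : u ≠ v) (hd : (sumGcd S T : ℤ) ∣ u - v) :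
    CompAdj n S T m u v := by
  obtain ⟨L, hL, hlen, hvu⟩ := h.exists_list_driftSet_modEq (dvd_sub_comm.1 hd)
  obtain ⟨k, hk, q, hq, hwalk, hdrift⟩ := h.exists_hasWalk_modEq_sum hSM hTM L hL hu
  have hkm : k + r ≤ m :=
    calc k + r ≤ ((s₀ + t₀) / sumGcd S T - 1) * (M + 1) + r :=
          Nat.add_le_add_right (hk.trans (Nat.mul_le_mul_right _ (by omega))) r
      _ ≤ m := hm
  obtain ⟨z, ⟨hz₁, hzN⟩, hz⟩ :=
    Int.exists_mem_Icc_modEq (N := (s₀ + t₀ : ℕ)) (by have := h.left_pos; omega) (v - m * t₀)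
  have hzn : z ∈ Icc 1 (n : ℤ) := mem_Icc.2 ⟨hz₁, hzN.trans (by exact_mod_cast h.add_le)⟩
  refine ⟨huv, z, ?_, h.hasWalk_of_modEq (hrs.trans (by gcongr; omega))
    (hrt.trans (by gcongr; omega)) hv hzn ?_⟩
  · have hqz := h.hasWalk_of_modEq (k := m - k) (hrs.trans (by gcongr; omega))
      (hrt.trans (by gcongr; omega)) hq hzn <|
      calc z - q + ↑(m - k) * t₀ = (z - (v - m * t₀)) + (v - u) - (q - u + k * t₀) := by
            push_cast [show k ≤ m by omega]; ring
        _ ≡ (v - m * t₀ - (v - m * t₀)) + L.sum - L.sum [ZMOD (s₀ + t₀ : ℕ)] :=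
            ((hz.sub_right _).add hvu).sub hdrift
        _ = 0 := by ring
    simpa [Nat.add_sub_cancel' (show k ≤ m by omega)] using hwalk.append hqz
  · calc z - v + m * t₀ = z - (v - m * t₀) := by ring
      _ ≡ v - m * t₀ - (v - m * t₀) [ZMOD (s₀ + t₀ : ℕ)] := hz.sub_right _
      _ = 0 := sub_self _

end IsAnchorPair

theorem Fin.le_last_of_mem_image {α : Type*} [Preorder α] [DecidableEq α] {k : ℕ}
    {f : Fin (k + 1) → α} (hf : Monotone f) {a : α} (ha : a ∈ univ.image f) :
    a ≤ f (Fin.last k) := by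
  obtain ⟨i, -, rfl⟩ := mem_image.1 ha
  exact hf (Fin.le_last i)

theorem le_ceilDiv_sub_one_mul_add_mul {n d M N t₀ : ℕ} (hd : 0 < d) (hdN : d ≤ N)
    (hN : N ≤ (M + 1) * t₀) (ht₀ : 0 < t₀) : n ≤ ((n ⌈/⌉ d - 1) * (M + 1) + N) * t₀ := by
  have hc : d * (n ⌈/⌉ d) ≤ (n ⌈/⌉ d - 1) * d + d := by
    generalize n ⌈/⌉ d = c
    rcases c with _ | c <;> simp [Nat.mul_succ, mul_comm]
  calc n ≤ d * (n ⌈/⌉ d) := le_smul_ceilDiv hd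
    _ ≤ (n ⌈/⌉ d - 1) * ((M + 1) * t₀) + N * t₀ :=
        hc.trans (add_le_add (Nat.mul_le_mul_left _ (hdN.trans hN))
          (hdN.trans (Nat.le_mul_of_pos_right _ ht₀)))
    _ = ((n ⌈/⌉ d - 1) * (M + 1) + N) * t₀ := by ring

theorem IsAnchorPair.compAdj_iff {n : ℕ} {S T : Finset ℕ} {s₀ t₀ M m : ℕ}
    (h : IsAnchorPair n S T s₀ t₀) (hSM : ∀ a ∈ S, a ≤ M * t₀) (hTM : ∀ b ∈ T, b ≤ M * s₀)
    (hm : 2 * (n ⌈/⌉ sumGcd S T - 1) * (M + 1) + 2 * (s₀ + t₀) ≤ m) {u v : ℤ}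
    (hu : u ∈ Icc 1 (n : ℤ)) (hv : v ∈ Icc 1 (n : ℤ)) (huv : u ≠ v) :
    CompAdj n S T m u v ↔ (sumGcd S T : ℤ) ∣ u - v := by
  have hN : 0 < s₀ + t₀ := Nat.add_pos_left h.left_pos t₀
  have hdN := sumGcd_dvd_add h.mem_left h.mem_right
  have hdpos : 0 < sumGcd S T := Nat.pos_of_dvd_of_pos hdN hN
  have hdiv : (s₀ + t₀) / sumGcd S T ≤ n ⌈/⌉ sumGcd S T :=
    (Nat.div_le_div_right h.add_le).trans
      (by rw [Nat.ceilDiv_eq_add_pred_div]; exact Nat.div_le_div_right (by omega))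
  have hlen := Nat.mul_le_mul_right (M + 1) (Nat.sub_le_sub_right hdiv 1)
  refine ⟨fun hc => hc.sumGcd_dvd_sub h.mem_left h.mem_right,
    h.compAdj_of_dvd hSM hTM (r := (n ⌈/⌉ sumGcd S T - 1) * (M + 1) + (s₀ + t₀)) ?_ ?_
      (by linarith) hu hv huv⟩
  · exact le_ceilDiv_sub_one_mul_add_mul hdpos (Nat.le_of_dvd hN hdN)
      (by nlinarith [hTM t₀ h.mem_right]) h.left_pos
  · exact le_ceilDiv_sub_one_mul_add_mul hdpos (Nat.le_of_dvd hN hdN)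
      (by nlinarith [hSM s₀ h.mem_left]) h.right_pos

theorem competition_index_bound_general (n k₁ k₂ : ℕ)
    (s : Fin (k₁ + 1) → ℕ) (t : Fin (k₂ + 1) → ℕ)
    (hs : StrictMono s) (ht : StrictMono t)
    (hsmem : ∀ i, s i ∈ Finset.Icc 1 (n - 1)) (htmem : ∀ j, t j ∈ Finset.Icc 1 (n - 1))
    (hST1 : s (Fin.last k₁) + t 0 ≤ n) (hST2 : s 0 + t (Fin.last k₂) ≤ n)
    (d : ℕ)
    (hd : d = Finset.univ.gcd (fun p : Fin (k₁ + 1) × Fin (k₂ + 1) => s p.1 + t p.2)) :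
    ∀ m : ℕ,
      2 * (n ⌈/⌉ d - 1) * (max (t (Fin.last k₂) ⌈/⌉ s 0) (s (Fin.last k₁) ⌈/⌉ t 0) + 1)
        + 2 * (s 0 + t 0) ≤ m →
      ∀ u ∈ Finset.Icc (1 : ℤ) (n : ℤ), ∀ v ∈ Finset.Icc (1 : ℤ) (n : ℤ), u ≠ v →
        (CompAdj n (Finset.image s Finset.univ) (Finset.image t Finset.univ) m u v ↔
          (d : ℤ) ∣ u - v) := by
  intro m hm u hu v hv huv
  have hs₀ : 0 < s 0 := (mem_Icc.1 (hsmem 0)).1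
  have ht₀ : 0 < t 0 := (mem_Icc.1 (htmem 0)).1
  have hSmax := fun a => Fin.le_last_of_mem_image (a := a) hs.monotone
  have hTmax := fun b => Fin.le_last_of_mem_image (a := b) ht.monotone
  have hanchor : IsAnchorPair n (univ.image s) (univ.image t) (s 0) (t 0) :=
    ⟨mem_image_of_mem s (mem_univ 0), mem_image_of_mem t (mem_univ 0), hs₀, ht₀,
      fun a ha => (Nat.add_le_add_right (hSmax a ha) _).trans hST1,
      fun b hb => (Nat.add_le_add_left (hTmax b hb) _).trans hST2⟩
  obtain rfl : d = sumGcd (univ.image s) (univ.image t) := by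
    rw [hd, sumGcd, ← prodMap_image_product, gcd_image, univ_product_univ]; rfl
  refine hanchor.compAdj_iff (fun a ha => (hSmax a ha).trans ?_)
    (fun b hb => (hTmax b hb).trans ?_) hm hu hv huv
  · rw [mul_comm]; exact (ceilDiv_le_iff_le_mul ht₀).1 (le_max_right _ _)
  · rw [mul_comm]; exact (ceilDiv_le_iff_le_mul hs₀).1 (le_max_left _ _)

/-- (Competition-index bound.)  If each induced subgraph of `C(D)`
on a residue class modulo `d` is connected, then for every
`m ≥ 2(⌈n/d⌉ − 1)(max{⌈t_{k₂}/s_1⌉, ⌈s_{k₁}/t_1⌉} + 1) + 2(s_1 + t_1)`, distinct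
vertices `u, v` are adjacent in `C^m(D)` iff `u ≡ v (mod d)`. -/
theorem competition_index_bound (n k₁ k₂ : ℕ) (hn : 2 ≤ n)
    (s : Fin (k₁ + 1) → ℕ) (t : Fin (k₂ + 1) → ℕ)
    (hs : StrictMono s) (ht : StrictMono t)
    (hsmem : ∀ i, s i ∈ Finset.Icc 1 (n - 1)) (htmem : ∀ j, t j ∈ Finset.Icc 1 (n - 1))
    (hST1 : s (Fin.last k₁) + t 0 ≤ n) (hST2 : s 0 + t (Fin.last k₂) ≤ n)
    (d : ℕ)
    (hd : d = Finset.univ.gcd (fun p : Fin (k₁ + 1) × Fin (k₂ + 1) => s p.1 + t p.2))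
    (hconn : ∀ u ∈ Finset.Icc (1 : ℤ) (n : ℤ), ∀ v ∈ Finset.Icc (1 : ℤ) (n : ℤ),
      (d : ℤ) ∣ u - v →
        Relation.ReflTransGen
          (fun x y => x ∈ Finset.Icc (1 : ℤ) (n : ℤ) ∧ y ∈ Finset.Icc (1 : ℤ) (n : ℤ) ∧
            (d : ℤ) ∣ x - u ∧ (d : ℤ) ∣ y - u ∧
            CompAdj n (Finset.image s Finset.univ) (Finset.image t Finset.univ) 1 x y)
          u v) :
    ∀ m : ℕ,
      2 * (n ⌈/⌉ d - 1) * (max (t (Fin.last k₂) ⌈/⌉ s 0) (s (Fin.last k₁) ⌈/⌉ t 0) + 1)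
        + 2 * (s 0 + t 0) ≤ m →
      ∀ u ∈ Finset.Icc (1 : ℤ) (n : ℤ), ∀ v ∈ Finset.Icc (1 : ℤ) (n : ℤ), u ≠ v →
        (CompAdj n (Finset.image s Finset.univ) (Finset.image t Finset.univ) m u v ↔
          (d : ℤ) ∣ u - v) :=
  competition_index_bound_general n k₁ k₂ s t hs ht hsmem htmem hST1 hST2 d hd
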